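/- arXiv:2504.19561 — 2 statements merged into one kernel-verified Lean document; each statement's English description precedes it below -/
import Mathlib

section
/- (Lower-bound half of Theorem 2: ESS lower bounds the state size.) If (A_i, B_i, C_i, D_i) with state sizes (n_i) is a recurrent realization of the causal operator T, then n_i ≥ rank(H_i) for every 1 ≤ i ≤ ℓ−1; that is, any recurrence realizing T must materialize at index i a state of size at least the rank of the operator submatrix H_i. -/
open Matrix

/-- `stProd n A i j` is the state-transition product `A (i-1) * A (i-2) * ⋯ * A j`
(mapping `ℝ^{n j}` to `ℝ^{n i}`), with the empty product (`i = j`) equal to the identity. -/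
noncomputable def stProd (n : ℕ → ℕ) (A : ∀ i : ℕ, Matrix (Fin (n (i + 1))) (Fin (n i)) ℝ) :
    (i j : ℕ) → Matrix (Fin (n i)) (Fin (n j)) ℝ
  | 0, j =>
      if h : (0 : ℕ) = j then
        (1 : Matrix (Fin (n 0)) (Fin (n 0)) ℝ).submatrix id (Fin.cast (congrArg n h.symm))
      else 0
  | i + 1, j =>
      if h : i + 1 = j then
        (1 : Matrix (Fin (n (i + 1))) (Fin (n (i + 1))) ℝ).submatrix id
          (Fin.cast (congrArg n h.symm))
      else A i * stProd n A i j

/-- `T` is a causal operator: its `d × d` blocks `T i j` vanish above the block diagonal. -/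
def IsCausal (d ℓ : ℕ) (T : ℕ → ℕ → Matrix (Fin d) (Fin d) ℝ) : Prop :=
  ∀ i j, i < ℓ → j < ℓ → i < j → T i j = 0

/-- `(A, B, C, D)` with state sizes `n` is a recurrent realization of the causal operator `T`:
`T i i = D i` and `T i j = C i * (A (i-1) * ⋯ * A (j+1)) * B j` for `i > j`. -/
def IsRealization (d ℓ : ℕ) (T : ℕ → ℕ → Matrix (Fin d) (Fin d) ℝ) (n : ℕ → ℕ)
    (A : ∀ i : ℕ, Matrix (Fin (n (i + 1))) (Fin (n i)) ℝ)
    (B : ∀ i : ℕ, Matrix (Fin (n (i + 1))) (Fin d) ℝ)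
    (C : ∀ i : ℕ, Matrix (Fin d) (Fin (n i)) ℝ)
    (D : ℕ → Matrix (Fin d) (Fin d) ℝ) : Prop :=
  (∀ i, i < ℓ → T i i = D i) ∧
  ∀ i j, i < ℓ → j < i → T i j = C i * stProd n A i (j + 1) * B j

/-- The operator submatrix `H_i = T_{i:,:i-1}`, with rows indexed by block row `i + k`
(`k < ℓ - i`) and columns by block column `j < i`. -/
def Hmat (d ℓ : ℕ) (T : ℕ → ℕ → Matrix (Fin d) (Fin d) ℝ) (i : ℕ) :
    Matrix (Fin (ℓ - i) × Fin d) (Fin i × Fin d) ℝ :=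
  fun p q => T (i + (p.1 : ℕ)) (q.1 : ℕ) p.2 q.2

/-- The observability matrix at index `i`, with block rows `C (i+k) * A (i+k-1) * ⋯ * A i`. -/
noncomputable def Obs (d ℓ : ℕ) (n : ℕ → ℕ)
    (A : ∀ i : ℕ, Matrix (Fin (n (i + 1))) (Fin (n i)) ℝ)
    (C : ∀ i : ℕ, Matrix (Fin d) (Fin (n i)) ℝ) (i : ℕ) :
    Matrix (Fin (ℓ - i) × Fin d) (Fin (n i)) ℝ :=
  fun p s => (C (i + (p.1 : ℕ)) * stProd n A (i + (p.1 : ℕ)) i) p.2 s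

/-- The controllability matrix at index `i`, with block columns `A (i-1) * ⋯ * A (j+1) * B j`. -/
noncomputable def Ctrb (d : ℕ) (n : ℕ → ℕ)
    (A : ∀ i : ℕ, Matrix (Fin (n (i + 1))) (Fin (n i)) ℝ)
    (B : ∀ i : ℕ, Matrix (Fin (n (i + 1))) (Fin d) ℝ) (i : ℕ) :
    Matrix (Fin (n i)) (Fin i × Fin d) ℝ :=
  fun s q => (stProd n A i ((q.1 : ℕ) + 1) * B (q.1 : ℕ)) s q.2


lemma stProd_self (n : ℕ) (nn : ℕ → ℕ) (A : ∀ i : ℕ, Matrix (Fin (nn (i + 1))) (Fin (nn i)) ℝ) :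
    stProd nn A n n = 1 := by
  cases n with
  | zero => simp [stProd]
  | succ m => simp [stProd]

lemma stProd_mul (nn : ℕ → ℕ) (A : ∀ i : ℕ, Matrix (Fin (nn (i + 1))) (Fin (nn i)) ℝ)
    (i k j : ℕ) (hjk : j ≤ k) (hki : k ≤ i) :
    stProd nn A i k * stProd nn A k j = stProd nn A i j := by
  induction i with
  | zero =>
      interval_cases k
      interval_cases j
      simp [stProd_self]
  | succ m ih =>
      rcases Nat.eq_or_lt_of_le hki with h | h
      · subst h; rw [stProd_self, Matrix.one_mul]
      · have hkm : k ≤ m := Nat.lt_succ_iff.mp h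
        have h1 : stProd nn A (m + 1) k = A m * stProd nn A m k := by
          rw [stProd]
          rw [dif_neg (by omega)]
        have h2 : stProd nn A (m + 1) j = A m * stProd nn A m j := by
          rw [stProd]
          rw [dif_neg (by omega)]
        rw [h1, h2, Matrix.mul_assoc, ih hkm]

/-- any recurrent realization of a causal operator `T` has state sizes
`n i ≥ rank H_i` for `1 ≤ i ≤ ℓ - 1`. -/
theorem rank_Hmat_le_state_size (d ℓ : ℕ) (hd : 1 ≤ d) (hℓ : 1 ≤ ℓ)
    (T : ℕ → ℕ → Matrix (Fin d) (Fin d) ℝ) (hT : IsCausal d ℓ T)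
    (n : ℕ → ℕ)
    (A : ∀ i : ℕ, Matrix (Fin (n (i + 1))) (Fin (n i)) ℝ)
    (B : ∀ i : ℕ, Matrix (Fin (n (i + 1))) (Fin d) ℝ)
    (C : ∀ i : ℕ, Matrix (Fin d) (Fin (n i)) ℝ)
    (D : ℕ → Matrix (Fin d) (Fin d) ℝ)
    (hreal : IsRealization d ℓ T n A B C D) :
    ∀ i, 1 ≤ i → i < ℓ → (Hmat d ℓ T i).rank ≤ n i := by
  intro i hi1 hiℓ
  have hfact : Hmat d ℓ T i = Obs d ℓ n A C i * Ctrb d n A B i := by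
    ext p q
    have hp : i + (p.1 : ℕ) < ℓ := by have := p.1.isLt; omega
    have hq : (q.1 : ℕ) < i := q.1.isLt
    have hT' := hreal.2 (i + (p.1 : ℕ)) (q.1 : ℕ) hp (by omega)
    have hst : stProd n A (i + (p.1 : ℕ)) i * stProd n A i ((q.1 : ℕ) + 1)
        = stProd n A (i + (p.1 : ℕ)) ((q.1 : ℕ) + 1) :=
      stProd_mul n A _ i _ (by omega) (by omega)
    have key : (C (i + (p.1 : ℕ)) * stProd n A (i + (p.1 : ℕ)) i)
        * (stProd n A i ((q.1 : ℕ) + 1) * B (q.1 : ℕ))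
        = C (i + (p.1 : ℕ)) * stProd n A (i + (p.1 : ℕ)) ((q.1 : ℕ) + 1) * B (q.1 : ℕ) := by
      rw [Matrix.mul_assoc, ← Matrix.mul_assoc (stProd n A (i + (p.1 : ℕ)) i), hst,
        ← Matrix.mul_assoc]
    have : Hmat d ℓ T i p q = ((C (i + (p.1 : ℕ)) * stProd n A (i + (p.1 : ℕ)) i)
        * (stProd n A i ((q.1 : ℕ) + 1) * B (q.1 : ℕ))) p.2 q.2 := by
      rw [key]
      simp [Hmat, hT']
    rw [this, Matrix.mul_apply]
    rfl
  rw [hfact]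
  calc (Obs d ℓ n A C i * Ctrb d n A B i).rank ≤ (Obs d ℓ n A C i).rank :=
        Matrix.rank_mul_le_left _ _
    _ ≤ Fintype.card (Fin (n i)) := Matrix.rank_le_card_width _
    _ = n i := Fintype.card_fin _
end

section
/- (Theorem 2.) For every causal operator T and every index 1 ≤ i ≤ ℓ−1, the minimum of the state size n_i over all recurrent realizations of T equals rank(H_i); that is, the rank of the operator submatrix H_i = T_{i:,:i−1} is exactly the minimal state size required to represent the causal operation y = Tu as a recurrence at sequence index i. -/
open Matrix

/-! Any realization factors `H_i` through its state space at time `i`: `H_i` is the product of the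
observability and the controllability matrix at time `i`, so `rank H_i ≤ n i`. Conversely, a rank
factorization `H_i = P * Q` gives a realization with `n i = rank H_i`: away from time `i` the state
stores the whole input history, while at time `i` the history `u_0, …, u_{i-1}` is compressed to
`Q (u_0, …, u_{i-1})`, which is all the later outputs need, since they see it through `P`. -/

section StateTransition

variable {n : ℕ → ℕ} {A : ∀ i : ℕ, Matrix (Fin (n (i + 1))) (Fin (n i)) ℝ}

lemma stProd_self_s10 (k : ℕ) : stProd n A k k = 1 := by
  ext s t
  cases k <;> simp [stProd, Matrix.one_apply, Fin.ext_iff]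

lemma stProd_succ_of_ne {k j : ℕ} (h : k + 1 ≠ j) :
    stProd n A (k + 1) j = A k * stProd n A k j := by
  rw [stProd, dif_neg h]

lemma stProd_mul_stProd {j m k : ℕ} (hjm : j ≤ m) (hmk : m ≤ k) :
    stProd n A k m * stProd n A m j = stProd n A k j := by
  induction k, hmk using Nat.le_induction with
  | base => rw [stProd_self_s10, Matrix.one_mul]
  | succ k hmk ih =>
    rw [stProd_succ_of_ne (by omega), stProd_succ_of_ne (by omega), Matrix.mul_assoc, ih]

lemma stProd_mul_eq_of_propagates {d ℓ : ℕ} (R : ∀ k : ℕ, ℕ → Matrix (Fin (n k)) (Fin d) ℝ)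
    (hR : ∀ k j, j < k → k < ℓ → A k * R k j = R (k + 1) j) {j k : ℕ} (hjk : j < k)
    (hk : k ≤ ℓ) : stProd n A k (j + 1) * R (j + 1) j = R k j := by
  induction k, hjk using Nat.le_induction with
  | base => rw [stProd_self_s10, Matrix.one_mul]
  | succ k hjk ih =>
    rw [stProd_succ_of_ne (by omega), Matrix.mul_assoc, ih (by omega), hR k j hjk (by omega)]

end StateTransition

/-- `R k j` plays the role of the state at time `k` caused by a unit input at time `j`. -/
lemma isRealization_of_propagates {d ℓ : ℕ} {T : ℕ → ℕ → Matrix (Fin d) (Fin d) ℝ}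
    {n : ℕ → ℕ} {A : ∀ i : ℕ, Matrix (Fin (n (i + 1))) (Fin (n i)) ℝ}
    {C : ∀ i : ℕ, Matrix (Fin d) (Fin (n i)) ℝ} (R : ∀ k : ℕ, ℕ → Matrix (Fin (n k)) (Fin d) ℝ)
    (hA : ∀ k j, j < k → k < ℓ → A k * R k j = R (k + 1) j)
    (hC : ∀ k j, j < k → k < ℓ → C k * R k j = T k j) :
    IsRealization d ℓ T n A (fun j => R (j + 1) j) C (fun k => T k k) := by
  refine ⟨fun _ _ => rfl, fun k j hk hjk => ?_⟩
  rw [Matrix.mul_assoc, stProd_mul_eq_of_propagates R hA hjk hk.le, hC k j hjk hk]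

namespace IsRealization

variable {d ℓ : ℕ} {T : ℕ → ℕ → Matrix (Fin d) (Fin d) ℝ} {n : ℕ → ℕ}
  {A : ∀ i : ℕ, Matrix (Fin (n (i + 1))) (Fin (n i)) ℝ}
  {B : ∀ i : ℕ, Matrix (Fin (n (i + 1))) (Fin d) ℝ} {C : ∀ i : ℕ, Matrix (Fin d) (Fin (n i)) ℝ}
  {D : ℕ → Matrix (Fin d) (Fin d) ℝ}

lemma hmat_eq_obs_mul_ctrb (h : IsRealization d ℓ T n A B C D) (i : ℕ) :
    Hmat d ℓ T i = Obs d ℓ n A C i * Ctrb d n A B i := by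
  ext ⟨k, c⟩ ⟨j, c'⟩
  have hT : T (i + k) j = C (i + k) * stProd n A (i + k) i * (stProd n A i (j + 1) * B j) := by
    rw [h.2 _ _ (by omega) (by omega), ← stProd_mul_stProd (m := i) (by omega) (by omega)]
    simp only [Matrix.mul_assoc]
  simp only [Hmat, hT, Matrix.mul_apply, Obs, Ctrb]

lemma rank_hmat_le (h : IsRealization d ℓ T n A B C D) (i : ℕ) :
    (Hmat d ℓ T i).rank ≤ n i := by
  rw [h.hmat_eq_obs_mul_ctrb i]
  exact (Matrix.rank_mul_le_left _ _).trans
    ((Matrix.rank_le_card_width _).trans_eq (Fintype.card_fin _))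

end IsRealization

theorem Matrix.exists_eq_mul_of_rank {K m p : Type*} [Field K] [Fintype m] [Fintype p]
    (H : Matrix m p K) :
    ∃ (P : Matrix m (Fin H.rank) K) (Q : Matrix (Fin H.rank) p K), H = P * Q := by
  classical
  let V := Submodule.span K (Set.range Hᵀ)
  let b : Module.Basis (Fin H.rank) K V :=
    (Module.finBasis K V).reindex (finCongr H.rank_eq_finrank_span_cols.symm)
  have hcol : ∀ c, Hᵀ c ∈ V := fun c => Submodule.subset_span ⟨c, rfl⟩
  refine ⟨Matrix.of fun x t => (b t : m → K) x, Matrix.of fun t c => b.repr ⟨Hᵀ c, hcol c⟩ t, ?_⟩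
  ext x c
  have hx := congrArg (fun v : V => (v : m → K) x) (b.sum_repr ⟨Hᵀ c, hcol c⟩)
  simp only [Submodule.coe_sum, Submodule.coe_smul, Finset.sum_apply, Pi.smul_apply,
    smul_eq_mul] at hx
  rw [Matrix.mul_apply, show H x c = Hᵀ c x from rfl, ← hx]
  exact Finset.sum_congr rfl fun _ _ => mul_comm _ _

section BasisCols

variable {β γ : Type*}

/-- Column `t` is the standard basis vector `e (f t)`, and zero when `f t ≥ m`. -/
def basisCols (m : ℕ) (f : β → ℕ) : Matrix (Fin m) β ℝ :=
  Matrix.of fun s t => if (s : ℕ) = f t then 1 else 0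

lemma basisCols_transpose_mul_basisCols {m : ℕ} (f : β → ℕ) (g : γ → ℕ) (hg : ∀ t, g t < m) :
    (basisCols m f)ᵀ * basisCols m g =
      Matrix.of fun t t' => if f t = g t' then (1 : ℝ) else 0 := by
  ext t t'
  rw [Matrix.mul_apply, Finset.sum_eq_single ⟨g t', hg t'⟩
    (fun s _ hs => by simp [basisCols, Fin.ext_iff.not.mp hs]) (by simp)]
  simp [basisCols, eq_comm]

lemma basisCols_val_transpose_mul_basisCols {m m' : ℕ} (g : γ → ℕ) (hg : ∀ t, g t < m) :
    (basisCols m (Fin.val : Fin m' → ℕ))ᵀ * basisCols m g = basisCols m' g :=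
  basisCols_transpose_mul_basisCols _ g hg

lemma basisCols_transpose_mul_basisCols_eq_zero {m : ℕ} {f : β → ℕ} {g : γ → ℕ}
    (hg : ∀ t, g t < m) (hfg : ∀ t t', f t ≠ g t') : (basisCols m f)ᵀ * basisCols m g = 0 := by
  rw [basisCols_transpose_mul_basisCols f g hg]
  ext t t'
  simp [hfg t t']

lemma basisCols_val (m : ℕ) : basisCols m (Fin.val : Fin m → ℕ) = 1 := by
  ext s t
  simp [basisCols, Matrix.one_apply, Fin.ext_iff]

end BasisCols

namespace MinimalRealization

variable {d ℓ i r : ℕ}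

/-- Away from time `i` the state has a block of `r` coordinates for the compressed history,
followed by one slot of `d` coordinates for each input `u j`, `j < ℓ`, at `slot r d j`. -/
def stateDim (d ℓ i r k : ℕ) : ℕ := if k = i then r else r + d * ℓ

def slot (r d j : ℕ) (c : Fin d) : ℕ := r + d * j + c

lemma le_stateDim (k : ℕ) : r ≤ stateDim d ℓ i r k := by
  unfold stateDim; split_ifs <;> omega

lemma slot_lt_stateDim {j k : ℕ} (hj : j < ℓ) (hk : k ≠ i) (c : Fin d) :
    slot r d j c < stateDim d ℓ i r k := by
  have : d * j + c < d * ℓ := by nlinarith [c.isLt]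
  simp only [stateDim, if_neg hk, slot]; omega

lemma val_ne_slot {j : ℕ} (s : Fin r) (c : Fin d) : (s : ℕ) ≠ slot r d j c := by
  simp only [slot]; omega

lemma slot_inj {j j' : ℕ} {c c' : Fin d} : slot r d j c = slot r d j' c' ↔ j = j' ∧ c = c' := by
  refine ⟨fun h => ?_, fun ⟨hj, hc⟩ => hj ▸ hc ▸ rfl⟩
  have h' : d * j + c = d * j' + c' := by simp only [slot] at h; omega
  have hj : j = j' := by
    simpa [Nat.mul_add_div c.pos, Nat.div_eq_of_lt c.isLt, Nat.div_eq_of_lt c'.isLt] using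
      congrArg (· / d) h'
  exact ⟨hj, Fin.ext (by subst hj; omega)⟩

lemma mul_slots_transpose_mul_basisCols_slot {ι : Type*} {a m j : ℕ}
    (M : Matrix ι (Fin a × Fin d) ℝ) (hj : j < a) (hm : ∀ c, slot r d j c < m) :
    M * ((basisCols m fun p : Fin a × Fin d => slot r d p.1 p.2)ᵀ * basisCols m (slot r d j)) =
      Matrix.of fun s c => M s (⟨j, hj⟩, c) := by
  rw [basisCols_transpose_mul_basisCols _ _ hm]
  ext s c
  have hp : ∀ p : Fin a × Fin d, ((p.1 : ℕ) = j ∧ p.2 = c) ↔ p = (⟨j, hj⟩, c) := by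
    simp [Prod.ext_iff, Fin.ext_iff]
  simp [Matrix.mul_apply, slot_inj, hp]

def qBlock (Q : Matrix (Fin r) (Fin i × Fin d) ℝ) (j : ℕ) : Matrix (Fin r) (Fin d) ℝ :=
  Matrix.of fun s c => if h : j < i then Q s (⟨j, h⟩, c) else 0

def pBlock (P : Matrix (Fin (ℓ - i) × Fin d) (Fin r) ℝ) (k : ℕ) : Matrix (Fin d) (Fin r) ℝ :=
  Matrix.of fun c s => if h : i ≤ k ∧ k < ℓ then P (⟨k - i, by omega⟩, c) s else 0

lemma pBlock_mul_qBlock {T : ℕ → ℕ → Matrix (Fin d) (Fin d) ℝ}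
    {P : Matrix (Fin (ℓ - i) × Fin d) (Fin r) ℝ} {Q : Matrix (Fin r) (Fin i × Fin d) ℝ}
    (hPQ : Hmat d ℓ T i = P * Q) {j k : ℕ} (hj : j < i) (hik : i ≤ k) (hk : k < ℓ) :
    pBlock P k * qBlock Q j = T k j := by
  ext c c'
  have hT := congrFun₂ hPQ (⟨k - i, by omega⟩, c) (⟨j, hj⟩, c')
  simp only [Hmat, Nat.add_sub_cancel' hik, Matrix.mul_apply] at hT
  simp [hT, pBlock, qBlock, Matrix.mul_apply, hj, hik, hk]

-- Without the ascriptions on `Fin.val` and `p`, `*` falls back to the `CStarMatrix` instance.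
def stateA (ℓ : ℕ) (Q : Matrix (Fin r) (Fin i × Fin d) ℝ) (k : ℕ) :
    Matrix (Fin (stateDim d ℓ i r (k + 1))) (Fin (stateDim d ℓ i r k)) ℝ :=
  if k + 1 = i then
    basisCols _ (Fin.val : Fin r → ℕ) * Q *
      (basisCols (stateDim d ℓ i r k) fun p : Fin i × Fin d => slot r d p.1 p.2)ᵀ
  else (basisCols _ Fin.val)ᵀ

def stateC (T : ℕ → ℕ → Matrix (Fin d) (Fin d) ℝ) (P : Matrix (Fin (ℓ - i) × Fin d) (Fin r) ℝ)
    (k : ℕ) : Matrix (Fin d) (Fin (stateDim d ℓ i r k)) ℝ :=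
  pBlock P k * (basisCols _ (Fin.val : Fin r → ℕ))ᵀ +
    Matrix.of (fun c (p : Fin ℓ × Fin d) => T k p.1 c p.2) *
      (basisCols _ fun p : Fin ℓ × Fin d => slot r d p.1 p.2)ᵀ

def response (ℓ : ℕ) (Q : Matrix (Fin r) (Fin i × Fin d) ℝ) (k j : ℕ) :
    Matrix (Fin (stateDim d ℓ i r k)) (Fin d) ℝ :=
  if j < i ∧ i ≤ k then basisCols _ (Fin.val : Fin r → ℕ) * qBlock Q j
  else basisCols _ (slot r d j)

lemma stateA_mul_response (Q : Matrix (Fin r) (Fin i × Fin d) ℝ) {j k : ℕ} (hjk : j < k)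
    (hk : k < ℓ) : stateA ℓ Q k * response ℓ Q k j = response ℓ Q (k + 1) j := by
  unfold stateA response
  by_cases hki : k + 1 = i
  · have hj : j < i := by omega
    rw [if_pos hki, if_neg (by omega), if_pos ⟨hj, hki.ge⟩]
    simp only [Matrix.mul_assoc]
    rw [mul_slots_transpose_mul_basisCols_slot Q hj (slot_lt_stateDim (by omega) (by omega))]
    congr 1
    ext s c
    simp [qBlock, hj]
  · rw [if_neg hki, if_congr (show j < i ∧ i ≤ k + 1 ↔ j < i ∧ i ≤ k by omega) rfl rfl]
    split_ifs with h
    · rw [← Matrix.mul_assoc, basisCols_val_transpose_mul_basisCols _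
        fun s => s.isLt.trans_le (le_stateDim k)]
    · exact basisCols_val_transpose_mul_basisCols _ (slot_lt_stateDim (by omega) (by omega))

lemma stateC_mul_response {T : ℕ → ℕ → Matrix (Fin d) (Fin d) ℝ}
    {P : Matrix (Fin (ℓ - i) × Fin d) (Fin r) ℝ} {Q : Matrix (Fin r) (Fin i × Fin d) ℝ}
    (hPQ : Hmat d ℓ T i = P * Q) {j k : ℕ} (hjk : j < k) (hk : k < ℓ) :
    stateC T P k * response ℓ Q k j = T k j := by
  have hr : ∀ s : Fin r, (s : ℕ) < stateDim d ℓ i r k := fun s => s.isLt.trans_le (le_stateDim k)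
  unfold stateC response
  rw [Matrix.add_mul, Matrix.mul_assoc, Matrix.mul_assoc]
  split_ifs with h
  · rw [← Matrix.mul_assoc _ (basisCols _ _), ← Matrix.mul_assoc _ (basisCols _ _),
      basisCols_val_transpose_mul_basisCols _ hr, basisCols_val, Matrix.one_mul,
      basisCols_transpose_mul_basisCols_eq_zero hr fun p s => (val_ne_slot s p.2).symm,
      Matrix.zero_mul, Matrix.mul_zero, add_zero, pBlock_mul_qBlock hPQ h.1 h.2 hk]
  · have hslot := slot_lt_stateDim (d := d) (r := r) (hjk.trans hk) (show k ≠ i by omega)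
    rw [basisCols_transpose_mul_basisCols_eq_zero hslot fun s c => val_ne_slot s c,
      Matrix.mul_zero, zero_add, mul_slots_transpose_mul_basisCols_slot _ (hjk.trans hk) hslot]
    rfl

theorem isRealization {T : ℕ → ℕ → Matrix (Fin d) (Fin d) ℝ}
    {P : Matrix (Fin (ℓ - i) × Fin d) (Fin r) ℝ} {Q : Matrix (Fin r) (Fin i × Fin d) ℝ}
    (hPQ : Hmat d ℓ T i = P * Q) :
    IsRealization d ℓ T (stateDim d ℓ i r) (stateA ℓ Q) (fun j => response ℓ Q (j + 1) j)
      (stateC T P) (fun k => T k k) :=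
  isRealization_of_propagates _ (fun _ _ => stateA_mul_response Q)
    (fun _ _ => stateC_mul_response hPQ)

end MinimalRealization

theorem minimal_state_size_eq_rank_general (d ℓ : ℕ)
    (T : ℕ → ℕ → Matrix (Fin d) (Fin d) ℝ)
    (i : ℕ) :
    IsLeast {k : ℕ | ∃ (n : ℕ → ℕ)
        (A : ∀ j : ℕ, Matrix (Fin (n (j + 1))) (Fin (n j)) ℝ)
        (B : ∀ j : ℕ, Matrix (Fin (n (j + 1))) (Fin d) ℝ)
        (C : ∀ j : ℕ, Matrix (Fin d) (Fin (n j)) ℝ)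
        (D : ℕ → Matrix (Fin d) (Fin d) ℝ),
        IsRealization d ℓ T n A B C D ∧ n i = k}
      (Hmat d ℓ T i).rank := by
  obtain ⟨P, Q, hPQ⟩ := (Hmat d ℓ T i).exists_eq_mul_of_rank
  refine ⟨⟨_, _, _, _, _, MinimalRealization.isRealization hPQ, if_pos rfl⟩, ?_⟩
  rintro k ⟨n, A, B, C, D, h, rfl⟩
  exact h.rank_hmat_le i

/-- Theorem 2: for every causal operator `T` and every `1 ≤ i ≤ ℓ - 1`,
the minimum of the state size `n i` over all recurrent realizations of `T` equals
`rank H_i`. -/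
theorem minimal_state_size_eq_rank (d ℓ : ℕ) (hd : 1 ≤ d) (hℓ : 1 ≤ ℓ)
    (T : ℕ → ℕ → Matrix (Fin d) (Fin d) ℝ) (hT : IsCausal d ℓ T)
    (i : ℕ) (h1 : 1 ≤ i) (h2 : i < ℓ) :
    IsLeast {k : ℕ | ∃ (n : ℕ → ℕ)
        (A : ∀ j : ℕ, Matrix (Fin (n (j + 1))) (Fin (n j)) ℝ)
        (B : ∀ j : ℕ, Matrix (Fin (n (j + 1))) (Fin d) ℝ)
        (C : ∀ j : ℕ, Matrix (Fin d) (Fin (n j)) ℝ)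
        (D : ℕ → Matrix (Fin d) (Fin d) ℝ),
        IsRealization d ℓ T n A B C D ∧ n i = k}
      (Hmat d ℓ T i).rank :=
  minimal_state_size_eq_rank_general d ℓ T i
end
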